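/- For every Schwartz function φ ∈ S(ℝⁿ), the random variable ω ↦ ⟨ω,φ⟩ on (Ω,P) has variance ∫_Ω ⟨ω,φ⟩² P(dω) = M ∫_{ℝⁿ} φ(x)² dx, where M = ∫_ℝ z² ν(dz). -/

import Mathlib

open MeasureTheory Complex

noncomputable section

/-- The space ℝⁿ. -/
abbrev En (n : ℕ) := EuclideanSpace ℝ (Fin n)

/-- The white noise probability space Ω = 𝒮'(ℝⁿ), the space of tempered
distributions (the continuous dual of the Schwartz space), with the weak* topology. -/
abbrev WNSpace (n : ℕ) := WeakDual ℝ (SchwartzMap (En n) ℝ)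

/-- The Borel σ-algebra on Ω. -/
instance (n : ℕ) : MeasurableSpace (WNSpace n) := borel _

/-- The Lévy exponent Ψ(w) = ∫ (e^{iwz} − 1 − iwz) ν(dz). -/
def levyExponent (ν : Measure ℝ) (w : ℝ) : ℂ :=
  ∫ z : ℝ, (Complex.exp (Complex.I * w * z) - 1 - Complex.I * w * z) ∂ν

/-!
Write `X = ⟨·, φ⟩` and `A t = ∫ Ψ(t φ(x)) dx`, so that `E[exp (i t X)] = exp (A t)` by the
Bochner–Minlos identity. From `|e^{is} - 1 - is| ≤ s²` and `(e^{is} - 1 - is) / s² → -1/2`,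
dominated convergence (first in `z`, then in `x`) gives `A t / t² → -M ‖φ‖₂² / 2`, hence
`E[2 (1 - cos (t X)) / t²] = 2 (1 - Re exp (A t)) / t² → M ‖φ‖₂²` as `t → 0`.
The integrands `2 (1 - cos (t X)) / t²` are nonnegative, bounded by `X²` and tend to `X²`, so
Fatou's lemma gives `X² ∈ L¹` and dominated convergence identifies the limit with `E[X²]`.
-/

open Filter Topology

namespace Complex

lemma norm_exp_I_mul_ofReal_sub_one_sub_le (s : ℝ) : ‖exp (I * s) - 1 - I * s‖ ≤ s ^ 2 := by
  let f : ℝ → ℂ := fun u => exp (I * u) - 1 - I * u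
  have hf : ∀ u ∈ Metric.closedBall (0 : ℝ) |s|,
      HasDerivWithinAt f (I * (exp (I * u) - 1)) (Metric.closedBall 0 |s|) u := by
    intro u _
    have h := (((hasDerivAt_id (u : ℂ)).const_mul I).cexp.sub_const 1).sub
      ((hasDerivAt_id (u : ℂ)).const_mul I)
    simpa [f, mul_sub, mul_comm] using (h.comp_ofReal).hasDerivWithinAt
  have hbound : ∀ u ∈ Metric.closedBall (0 : ℝ) |s|, ‖I * (exp (I * u) - 1)‖ ≤ |s| := by
    intro u hu
    rw [norm_mul, norm_I, one_mul]
    exact Real.norm_exp_I_mul_ofReal_sub_one_le.trans (by simpa using hu)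
  have := (convex_closedBall (0 : ℝ) |s|).norm_image_sub_le_of_norm_hasDerivWithin_le hf hbound
    (Metric.mem_closedBall_self (abs_nonneg s)) (by simp : s ∈ Metric.closedBall 0 |s|)
  simpa [f, ← sq] using this

lemma re_exp_I_mul_ofReal_sub_one_sub (s : ℝ) :
    (exp (I * s) - 1 - I * s).re = Real.cos s - 1 := by
  simp [exp_re]

lemma tendsto_exp_sub_one_sub_div_sq :
    Tendsto (fun z : ℂ => (exp z - 1 - z) / z ^ 2) (𝓝[≠] 0) (𝓝 (1 / 2)) := by
  rw [← tendsto_sub_nhds_zero_iff]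
  refine squeeze_zero_norm' (a := fun z : ℂ => ‖z‖ * (2 / 9)) ?_ ?_
  · filter_upwards [self_mem_nhdsWithin, nhdsWithin_le_nhds (Metric.closedBall_mem_nhds 0 one_pos)]
      with z (hz : z ≠ 0) hz1
    have hz1 : ‖z‖ ≤ 1 := by simpa using hz1
    have h := exp_bound hz1 (n := 3) (by norm_num)
    have hsum : ∑ m ∈ Finset.range 3, z ^ m / m.factorial = 1 + z + z ^ 2 / 2 := by
      simp [Finset.sum_range_succ]
    rw [hsum] at h
    have heq : (exp z - 1 - z) / z ^ 2 - 1 / 2 = (exp z - (1 + z + z ^ 2 / 2)) / z ^ 2 := by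
      field_simp; ring
    rw [heq, norm_div, norm_pow, div_le_iff₀ (by positivity)]
    calc _ ≤ _ := h
      _ = _ := by norm_num [Nat.factorial]; ring
  · exact ((continuous_norm.mul continuous_const).tendsto' (0 : ℂ) 0 (by simp)).mono_left
      nhdsWithin_le_nhds

lemma tendsto_exp_I_mul_ofReal_sub_one_sub_div_sq :
    Tendsto (fun s : ℝ => (exp (I * s) - 1 - I * s) / (s : ℂ) ^ 2) (𝓝[≠] 0) (𝓝 (-(1 / 2))) := by
  have hI : Tendsto (fun s : ℝ => I * s) (𝓝[≠] 0) (𝓝[≠] 0) := by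
    refine tendsto_nhdsWithin_of_tendsto_nhds_of_eventually_within _ ?_ ?_
    · exact ((continuous_const.mul continuous_ofReal).tendsto' 0 0 (by simp)).mono_left
        nhdsWithin_le_nhds
    · filter_upwards [self_mem_nhdsWithin] with s (hs : s ≠ 0) using by simp [hs]
  refine (tendsto_exp_sub_one_sub_div_sq.comp hI).neg.congr fun s => ?_
  simp only [Function.comp_apply, mul_pow, I_sq]
  ring

end Complex

lemma tendsto_mul_const_nhdsNE {c : ℝ} (hc : c ≠ 0) :
    Tendsto (fun t : ℝ => t * c) (𝓝[≠] 0) (𝓝[≠] 0) := by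
  refine tendsto_nhdsWithin_of_tendsto_nhds_of_eventually_within _ ?_ ?_
  · exact ((continuous_mul_const c).tendsto' 0 0 (zero_mul c)).mono_left nhdsWithin_le_nhds
  · filter_upwards [self_mem_nhdsWithin] with t (ht : t ≠ 0) using mul_ne_zero ht hc

lemma tendsto_comp_mul_div_sq {f : ℝ → ℂ} (hf0 : f 0 = 0) {L : ℂ}
    (hf : Tendsto (fun w : ℝ => f w / (w : ℂ) ^ 2) (𝓝[≠] 0) (𝓝 L)) (c : ℝ) :
    Tendsto (fun t : ℝ => f (t * c) / (t : ℂ) ^ 2) (𝓝[≠] 0) (𝓝 (c ^ 2 * L)) := by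
  rcases eq_or_ne c 0 with rfl | hc
  · simp [hf0]
  refine ((hf.comp (tendsto_mul_const_nhdsNE hc)).const_mul ((c : ℂ) ^ 2)).congr' ?_
  filter_upwards [self_mem_nhdsWithin] with t (ht : t ≠ 0)
  have : (c : ℂ) ≠ 0 := ofReal_ne_zero.mpr hc
  have : (t : ℂ) ≠ 0 := ofReal_ne_zero.mpr ht
  simp only [Function.comp_apply, ofReal_mul]
  field_simp

lemma tendsto_exp_sub_one_div {α : Type*} {l : Filter α} {a b : α → ℂ} {L : ℂ}
    (hab : Tendsto (fun x => a x / b x) l (𝓝 L)) (hb : Tendsto b l (𝓝 0))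
    (hb0 : ∀ᶠ x in l, b x ≠ 0) :
    Tendsto (fun x => (exp (a x) - 1) / b x) l (𝓝 L) := by
  have ha : Tendsto a l (𝓝 0) := by
    refine (mul_zero L ▸ hab.mul hb).congr' ?_
    filter_upwards [hb0] with x hx using div_mul_cancel₀ (a x) hx
  have hrem : Tendsto (fun x => (exp (a x) - 1 - a x) / b x) l (𝓝 0) := by
    refine squeeze_zero_norm' (a := fun x => ‖a x / b x‖ ^ 2 * ‖b x‖) ?_ ?_
    · filter_upwards [hb0, ha.norm.eventually_le_const (by norm_num : ‖(0 : ℂ)‖ < 1)]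
        with x hx hx1
      rw [norm_div, norm_div, div_le_iff₀ (norm_pos_iff.mpr hx)]
      calc _ ≤ ‖a x‖ ^ 2 := norm_exp_sub_one_sub_id_le hx1
        _ = _ := by field_simp
    · simpa using (hab.norm.pow 2).mul hb.norm
  refine (add_zero L ▸ hab.add hrem).congr' ?_
  filter_upwards [hb0] with x hx
  field_simp
  ring

section LevyExponent

variable {ν : Measure ℝ}

lemma levyExponent_eq_integral (ν : Measure ℝ) (w : ℝ) :
    levyExponent ν w = ∫ z : ℝ, (exp (I * ↑(w * z)) - 1 - I * ↑(w * z)) ∂ν := by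
  simp only [levyExponent, ofReal_mul, mul_assoc]

@[simp]
lemma levyExponent_zero (ν : Measure ℝ) : levyExponent ν 0 = 0 := by
  simp [levyExponent]

lemma norm_exp_I_mul_ofReal_mul_sub_one_sub_le (w z : ℝ) :
    ‖exp (I * ↑(w * z)) - 1 - I * ↑(w * z)‖ ≤ w ^ 2 * z ^ 2 :=
  (norm_exp_I_mul_ofReal_sub_one_sub_le _).trans_eq (mul_pow w z 2)

lemma norm_levyExponent_le (hM : Integrable (fun z : ℝ => z ^ 2) ν) (w : ℝ) :
    ‖levyExponent ν w‖ ≤ w ^ 2 * ∫ z : ℝ, z ^ 2 ∂ν := by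
  rw [levyExponent_eq_integral, ← integral_const_mul]
  exact norm_integral_le_of_norm_le (hM.const_mul _)
    (ae_of_all _ (norm_exp_I_mul_ofReal_mul_sub_one_sub_le w))

lemma continuous_levyExponent (hM : Integrable (fun z : ℝ => z ^ 2) ν) :
    Continuous (levyExponent ν) := by
  rw [funext (levyExponent_eq_integral ν), continuous_iff_continuousAt]
  intro w₀
  refine continuousAt_of_dominated (bound := fun z => (|w₀| + 1) ^ 2 * z ^ 2)
    (.of_forall fun w => by fun_prop) ?_ (hM.const_mul _) (ae_of_all _ fun z => by fun_prop)
  filter_upwards [Metric.closedBall_mem_nhds w₀ one_pos] with w hw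
  have hw : |w| ≤ |w₀| + 1 := by
    have := abs_sub_abs_le_abs_sub w w₀
    rw [Metric.mem_closedBall, Real.dist_eq] at hw
    linarith
  have hw2 : w ^ 2 ≤ (|w₀| + 1) ^ 2 := sq_abs w ▸ pow_le_pow_left₀ (abs_nonneg w) hw 2
  exact ae_of_all _ fun z => (norm_exp_I_mul_ofReal_mul_sub_one_sub_le w z).trans
    (mul_le_mul_of_nonneg_right hw2 (sq_nonneg z))

lemma tendsto_levyExponent_div_sq (hM : Integrable (fun z : ℝ => z ^ 2) ν) :
    Tendsto (fun w : ℝ => levyExponent ν w / (w : ℂ) ^ 2) (𝓝[≠] 0)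
      (𝓝 (-(1 / 2) * ↑(∫ z : ℝ, z ^ 2 ∂ν))) := by
  simp only [levyExponent_eq_integral, ← integral_div]
  rw [← integral_complex_ofReal, ← integral_const_mul]
  refine tendsto_integral_filter_of_dominated_convergence (bound := fun z => z ^ 2)
    (.of_forall fun w => by fun_prop) ?_ hM (ae_of_all _ fun z => ?_)
  · filter_upwards [self_mem_nhdsWithin] with w (hw : w ≠ 0)
    refine ae_of_all _ fun z => ?_
    rw [norm_div, norm_pow, norm_real, Real.norm_eq_abs, sq_abs, div_le_iff₀ (by positivity)]
    exact (norm_exp_I_mul_ofReal_mul_sub_one_sub_le w z).trans_eq (mul_comm _ _)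
  · have := tendsto_comp_mul_div_sq (by simp) tendsto_exp_I_mul_ofReal_sub_one_sub_div_sq z
    simpa [mul_comm] using this

lemma tendsto_integral_levyExponent_div_sq
    (hM : Integrable (fun z : ℝ => z ^ 2) ν) {α : Type*} [MeasurableSpace α] {μ : Measure α}
    {f : α → ℝ} (hf : MemLp f 2 μ) :
    Tendsto (fun t : ℝ => (∫ x, levyExponent ν (t * f x) ∂μ) / (t : ℂ) ^ 2) (𝓝[≠] 0)
      (𝓝 (-(1 / 2) * ↑(∫ z : ℝ, z ^ 2 ∂ν) * ↑(∫ x, f x ^ 2 ∂μ))) := by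
  have hf2 : Integrable (fun x => f x ^ 2) μ := (memLp_two_iff_integrable_sq hf.1).mp hf
  have hΨ := continuous_levyExponent hM
  have hlim : -(1 / 2) * ((∫ z : ℝ, z ^ 2 ∂ν : ℝ) : ℂ) * ((∫ x, f x ^ 2 ∂μ : ℝ) : ℂ)
      = ∫ x, (f x : ℂ) ^ 2 * (-(1 / 2) * ((∫ z : ℝ, z ^ 2 ∂ν : ℝ) : ℂ)) ∂μ := by
    rw [integral_mul_const, mul_comm]
    congr 1
    exact_mod_cast integral_complex_ofReal.symm
  simp only [← integral_div]
  rw [hlim]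
  refine tendsto_integral_filter_of_dominated_convergence
    (bound := fun x => (∫ z : ℝ, z ^ 2 ∂ν) * f x ^ 2) ?_ ?_ (hf2.const_mul _) ?_
  · exact .of_forall fun t => by have := hf.1; fun_prop
  · filter_upwards [self_mem_nhdsWithin] with t (ht : t ≠ 0)
    refine ae_of_all _ fun x => ?_
    rw [norm_div, norm_pow, norm_real, Real.norm_eq_abs, sq_abs, div_le_iff₀ (by positivity)]
    exact (norm_levyExponent_le hM _).trans_eq (by ring)
  · refine ae_of_all _ fun x => ?_
    have := tendsto_comp_mul_div_sq (levyExponent_zero ν) (tendsto_levyExponent_div_sq hM) (f x)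
    simpa using this

end LevyExponent

lemma re_div_ofReal_sq (z : ℂ) (t : ℝ) : (z / (t : ℂ) ^ 2).re = z.re / t ^ 2 := by
  rw [← ofReal_pow, div_ofReal_re]

lemma two_mul_one_sub_cos_mul_div_sq_nonneg (t x : ℝ) : 0 ≤ 2 * (1 - Real.cos (t * x)) / t ^ 2 :=
  div_nonneg (mul_nonneg zero_le_two (sub_nonneg.mpr (Real.cos_le_one _))) (sq_nonneg t)

lemma two_mul_one_sub_cos_mul_div_sq_le (t x : ℝ) : 2 * (1 - Real.cos (t * x)) / t ^ 2 ≤ x ^ 2 := by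
  rcases eq_or_ne t 0 with rfl | ht
  · simpa using sq_nonneg x
  rw [div_le_iff₀ (by positivity)]
  nlinarith [Real.one_sub_sq_div_two_le_cos (x := t * x)]

lemma tendsto_two_mul_one_sub_cos_mul_div_sq (x : ℝ) :
    Tendsto (fun t : ℝ => 2 * (1 - Real.cos (t * x)) / t ^ 2) (𝓝[≠] 0) (𝓝 (x ^ 2)) := by
  have h := (continuous_re.tendsto _).comp
    (tendsto_comp_mul_div_sq (by simp) tendsto_exp_I_mul_ofReal_sub_one_sub_div_sq x)
  convert h.const_mul (-2) using 1
  · ext t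
    simp only [Function.comp_apply, re_div_ofReal_sq, re_exp_I_mul_ofReal_sub_one_sub]
    ring
  · congr 1
    rw [← ofReal_pow, re_ofReal_mul, show (-(1 / 2) : ℂ).re = -(1 / 2) by norm_num]
    ring

section SecondMoment

variable {Ω : Type*} [MeasurableSpace Ω] {P : Measure Ω} {X : Ω → ℝ}

lemma integrable_two_mul_one_sub_cos_mul_div_sq [IsFiniteMeasure P] (hX : Measurable X) (t : ℝ) :
    Integrable (fun ω => 2 * (1 - Real.cos (t * X ω)) / t ^ 2) P :=
  .of_bound (by fun_prop) (4 / t ^ 2) (ae_of_all _ fun ω => by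
    rw [Real.norm_of_nonneg (two_mul_one_sub_cos_mul_div_sq_nonneg t _)]
    gcongr
    linarith [Real.neg_one_le_cos (t * X ω)])

lemma integrable_sq_of_tendsto_integral_two_mul_one_sub_cos [IsFiniteMeasure P]
    (hX : Measurable X) {c : ℝ}
    (h : Tendsto (fun t : ℝ => ∫ ω, 2 * (1 - Real.cos (t * X ω)) / t ^ 2 ∂P) (𝓝[≠] 0) (𝓝 c)) :
    Integrable (fun ω => X ω ^ 2) P := by
  refine ⟨by fun_prop, ?_⟩
  rw [hasFiniteIntegral_iff_ofReal (ae_of_all _ fun ω => sq_nonneg _)]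
  calc ∫⁻ ω, ENNReal.ofReal (X ω ^ 2) ∂P
      = ∫⁻ ω, liminf (fun t : ℝ => ENNReal.ofReal (2 * (1 - Real.cos (t * X ω)) / t ^ 2))
          (𝓝[≠] 0) ∂P :=
        lintegral_congr fun ω => ((ENNReal.continuous_ofReal.tendsto _).comp
          (tendsto_two_mul_one_sub_cos_mul_div_sq (X ω))).liminf_eq.symm
    _ ≤ liminf (fun t : ℝ => ∫⁻ ω, ENNReal.ofReal (2 * (1 - Real.cos (t * X ω)) / t ^ 2) ∂P)
          (𝓝[≠] 0) :=
        lintegral_liminf_le fun t => by fun_prop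
    _ = ENNReal.ofReal c := by
        simp_rw [← ofReal_integral_eq_lintegral_ofReal
          (integrable_two_mul_one_sub_cos_mul_div_sq hX _)
          (ae_of_all _ fun ω => two_mul_one_sub_cos_mul_div_sq_nonneg _ (X ω))]
        exact ((ENNReal.continuous_ofReal.tendsto c).comp h).liminf_eq
    _ < ⊤ := ENNReal.ofReal_lt_top

lemma integral_sq_eq_of_tendsto_integral_two_mul_one_sub_cos [IsFiniteMeasure P]
    (hX : Measurable X) {c : ℝ}
    (h : Tendsto (fun t : ℝ => ∫ ω, 2 * (1 - Real.cos (t * X ω)) / t ^ 2 ∂P) (𝓝[≠] 0) (𝓝 c)) :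
    ∫ ω, X ω ^ 2 ∂P = c := by
  refine tendsto_nhds_unique (tendsto_integral_filter_of_dominated_convergence
    (fun ω => X ω ^ 2) (.of_forall fun t => by fun_prop) (.of_forall fun t => ae_of_all _ ?_)
    (integrable_sq_of_tendsto_integral_two_mul_one_sub_cos hX h)
    (ae_of_all _ fun ω => tendsto_two_mul_one_sub_cos_mul_div_sq (X ω))) h
  intro ω
  rw [Real.norm_of_nonneg (two_mul_one_sub_cos_mul_div_sq_nonneg t _)]
  exact two_mul_one_sub_cos_mul_div_sq_le t (X ω)

lemma integral_two_mul_one_sub_cos_mul_div_sq [IsProbabilityMeasure P] (hX : Measurable X)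
    (t : ℝ) :
    ∫ ω, 2 * (1 - Real.cos (t * X ω)) / t ^ 2 ∂P
      = 2 * (1 - (∫ ω, exp (I * ↑(t * X ω)) ∂P).re) / t ^ 2 := by
  have hexp : Integrable (fun ω => exp (I * ↑(t * X ω))) P :=
    .of_bound (by fun_prop) 1 (ae_of_all _ fun ω => by simp [norm_exp])
  have hcos : ∫ ω, Real.cos (t * X ω) ∂P = (∫ ω, exp (I * ↑(t * X ω)) ∂P).re := by
    calc _ = ∫ ω, (exp (I * ↑(t * X ω))).re ∂P := by simp_rw [mul_comm I, exp_ofReal_mul_I_re]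
      _ = _ := integral_re hexp
  rw [integral_div, integral_const_mul, integral_sub (integrable_const 1), hcos]
  · simp
  · exact .of_bound (by fun_prop) 1 (ae_of_all _ fun ω => by simp [Real.abs_cos_le_one])

end SecondMoment

theorem variance_pairing_general
    (n : ℕ)
    (ν : Measure ℝ)
    (hM : Integrable (fun z : ℝ => z ^ 2) ν)
    (M : ℝ) (hMdef : M = ∫ z : ℝ, z ^ 2 ∂ν)
    (P : Measure (WNSpace n)) [IsProbabilityMeasure P]
    (hBM : ∀ φ : SchwartzMap (En n) ℝ,
      ∫ ω : WNSpace n, Complex.exp (Complex.I * (ω φ : ℝ)) ∂P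
        = Complex.exp (∫ x : En n, levyExponent ν (φ x))) :
    ∀ φ : SchwartzMap (En n) ℝ,
      ∫ ω : WNSpace n, (ω φ) ^ 2 ∂P = M * ∫ x : En n, (φ x) ^ 2 := by
  intro φ
  have : BorelSpace (WNSpace n) := ⟨rfl⟩
  have hX : Measurable fun ω : WNSpace n => ω φ := (WeakDual.eval_continuous φ).measurable
  have hcharFun (t : ℝ) : ∫ ω : WNSpace n, exp (I * ↑(t * ω φ)) ∂P
      = exp (∫ x : En n, levyExponent ν (t * φ x)) := by
    simpa using hBM (t • φ)
  have hsq : Tendsto (fun t : ℝ => ((t : ℂ) ^ 2)) (𝓝[≠] 0) (𝓝 0) := by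
    simpa using ((continuous_ofReal.tendsto' 0 0 ofReal_zero).pow 2).mono_left nhdsWithin_le_nhds
  have hsq0 : ∀ᶠ t : ℝ in 𝓝[≠] 0, (t : ℂ) ^ 2 ≠ 0 := by
    filter_upwards [self_mem_nhdsWithin] with t (ht : t ≠ 0) using by simpa using ht
  have hlim := (continuous_re.tendsto _).comp (tendsto_exp_sub_one_div
    (tendsto_integral_levyExponent_div_sq hM (φ.memLp 2)) hsq hsq0)
  refine integral_sq_eq_of_tendsto_integral_two_mul_one_sub_cos hX ?_
  convert hlim.const_mul (-2) using 1
  · ext t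
    simp only [Function.comp_apply, integral_two_mul_one_sub_cos_mul_div_sq hX, hcharFun,
      re_div_ofReal_sq, sub_re, one_re]
    ring
  · congr 1
    rw [mul_assoc, ← ofReal_mul, re_mul_ofReal, show (-(1 / 2) : ℂ).re = -(1 / 2) by norm_num,
      hMdef]
    ring

theorem variance_pairing
    (n : ℕ) (hn : 1 ≤ n)
    (ν : Measure ℝ) (hν0 : ν {0} = 0)
    (hM : Integrable (fun z : ℝ => z ^ 2) ν)
    (M : ℝ) (hMdef : M = ∫ z : ℝ, z ^ 2 ∂ν)
    (P : Measure (WNSpace n)) [IsProbabilityMeasure P]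
    (hBM : ∀ φ : SchwartzMap (En n) ℝ,
      ∫ ω : WNSpace n, Complex.exp (Complex.I * (ω φ : ℝ)) ∂P
        = Complex.exp (∫ x : En n, levyExponent ν (φ x))) :
    ∀ φ : SchwartzMap (En n) ℝ,
      ∫ ω : WNSpace n, (ω φ) ^ 2 ∂P = M * ∫ x : En n, (φ x) ^ 2 :=
  variance_pairing_general n ν hM M hMdef P hBM
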